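/- Under the unit-root assumption, if N_{−2} ≠ 0 and N_{−m} = 0 for every m ≥ 3 (i.e. (I − zA₁)^{−1} has a pole of order 2 at z = 1), then ran(I − A₁) ∩ ker(I − A₁) ≠ {0}. -/

import Mathlib

/-- Laurent coefficients at `z = 1` of the inverse pencil `(I - z A₁)⁻¹`:
`N j = -(1/(2πi)) ∮_{|z-1|=r} (I - z A₁)⁻¹ (z-1)^{-j-1} dz`. -/
noncomputable def laurentN {B : Type*} [NormedAddCommGroup B] [NormedSpace ℂ B]
    (A₁ : B →L[ℂ] B) (r : ℝ) (j : ℤ) : B →L[ℂ] B :=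
  (-(2 * (Real.pi : ℂ) * Complex.I)⁻¹) •
    circleIntegral (fun z => (z - 1) ^ (-j - 1) • Ring.inverse (1 - z • A₁)) 1 r

/-!
Comparing Laurent coefficients in `(I - A₁)(I - zA₁)⁻¹ = I + (z - 1) A₁ (I - zA₁)⁻¹`
gives `(I - A₁) N_j = A₁ N_{j-1}` for `j ≠ 0`; the identity contributes only to `j = 0`, since
`∮ (z - 1)^n dz = 0` for `n ≠ -1`. With `N_{-3} = 0` this yields `(I - A₁) N_{-2} = 0`, hence
`A₁ N_{-2} = N_{-2}` and then `(I - A₁) N_{-1} = N_{-2}`. So every nonzero vector `N_{-2} x`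
lies in both `ran (I - A₁)` and `ker (I - A₁)`.
-/

open Metric Set

theorem ContinuousLinearMap.circleIntegral_comp_comm {E F : Type*} [NormedAddCommGroup E]
    [NormedSpace ℂ E] [CompleteSpace E] [NormedAddCommGroup F] [NormedSpace ℂ F]
    [CompleteSpace F] (L : E →L[ℂ] F) {f : ℂ → E} {c : ℂ} {R : ℝ}
    (hf : CircleIntegrable f c R) :
    ∮ z in C(c, R), L (f z) = L (∮ z in C(c, R), f z) := by
  simp_rw [circleIntegral, ← L.map_smul]
  exact L.intervalIntegral_comp_comm hf.out

theorem ContinuousLinearMap.range_inf_ker_ne_bot_of_mul_eq {E : Type*} [NormedAddCommGroup E]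
    [NormedSpace ℂ E] {T S M : E →L[ℂ] E} (hS : S ≠ 0) (hTS : T * S = 0) (hTM : T * M = S) :
    LinearMap.range (T : E →ₗ[ℂ] E) ⊓ LinearMap.ker (T : E →ₗ[ℂ] E) ≠ ⊥ := by
  obtain ⟨x, hx⟩ : ∃ x, S x ≠ 0 := by
    by_contra! h
    exact hS (ContinuousLinearMap.ext h)
  refine Submodule.ne_bot_iff _ |>.mpr ⟨S x, Submodule.mem_inf.mpr ⟨⟨M x, ?_⟩, ?_⟩, hx⟩
  · exact DFunLike.congr_fun hTM x
  · exact DFunLike.congr_fun hTS x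

theorem one_sub_mul_ring_inverse_one_sub_smul {R : Type*} [Ring R] [Algebra ℂ R] (A : R) {z : ℂ}
    (hz : IsUnit (1 - z • A)) :
    (1 - A) * Ring.inverse (1 - z • A) = 1 + (z - 1) • (A * Ring.inverse (1 - z • A)) := by
  have hsplit : 1 - A = (1 - z • A) + (z - 1) • A := by
    rw [sub_smul, one_smul]; abel
  rw [hsplit, add_mul, Ring.mul_inverse_cancel _ hz, smul_mul_assoc]

section LaurentCoefficients

variable {B : Type*} [NormedAddCommGroup B] [NormedSpace ℂ B] [CompleteSpace B]
  (A : B →L[ℂ] B) {r : ℝ}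

theorem continuousOn_ring_inverse_one_sub_smul {s : Set ℂ}
    (hunit : ∀ z ∈ s, IsUnit (1 - z • A)) :
    ContinuousOn (fun z : ℂ => Ring.inverse (1 - z • A)) s := by
  intro z hz
  obtain ⟨u, hu⟩ := hunit z hz
  have hinverse : ContinuousAt Ring.inverse (1 - z • A) :=
    hu ▸ NormedRing.inverse_continuousAt u
  exact (hinverse.comp (f := fun z : ℂ => 1 - z • A) (by fun_prop)).continuousWithinAt

theorem continuousOn_sub_one_zpow (hr : 0 < r) (n : ℤ) :
    ContinuousOn (fun z : ℂ => (z - 1) ^ n) (sphere 1 r) :=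
  (continuousOn_id.sub continuousOn_const).zpow₀ n
    fun _ hz => .inl (sub_ne_zero.mpr (ne_of_mem_sphere hz hr.ne'))

theorem circleIntegrable_sub_zpow_smul_ring_inverse (hr : 0 < r)
    (hunit : ∀ z ∈ sphere (1 : ℂ) r, IsUnit (1 - z • A)) (n : ℤ) :
    CircleIntegrable (fun z => (z - 1) ^ n • Ring.inverse (1 - z • A)) 1 r :=
  ((continuousOn_sub_one_zpow hr n).smul
    (continuousOn_ring_inverse_one_sub_smul A hunit)).circleIntegrable hr.le

theorem one_sub_mul_laurentN (hr : 0 < r)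
    (hunit : ∀ z ∈ sphere (1 : ℂ) r, IsUnit (1 - z • A)) {j : ℤ} (hj : j ≠ 0) :
    (1 - A) * laurentN A r j = A * laurentN A r (j - 1) := by
  have hint := circleIntegrable_sub_zpow_smul_ring_inverse A hr hunit
  have hcomm (T : B →L[ℂ] B) (n : ℤ) :
      ∮ z in C(1, r), T * ((z - 1) ^ n • Ring.inverse (1 - z • A)) =
        T * ∮ z in C(1, r), (z - 1) ^ n • Ring.inverse (1 - z • A) :=
    (ContinuousLinearMap.mul ℂ (B →L[ℂ] B) T).circleIntegral_comp_comm (hint n)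
  have hpointwise : EqOn (fun z => (1 - A) * ((z - 1) ^ (-j - 1) • Ring.inverse (1 - z • A)))
      (fun z => (z - 1) ^ (-j - 1) • (1 : B →L[ℂ] B) +
        A * ((z - 1) ^ (-(j - 1) - 1) • Ring.inverse (1 - z • A)))
      (sphere (1 : ℂ) r) := by
    intro z hz
    have hz1 : z - 1 ≠ 0 := sub_ne_zero.mpr (ne_of_mem_sphere hz hr.ne')
    simp only [mul_smul_comm, one_sub_mul_ring_inverse_one_sub_smul A (hunit z hz), smul_add,
      smul_smul]
    rw [show -(j - 1) - 1 = (-j - 1) + 1 by ring, zpow_add_one₀ hz1]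
  have hpole : ∮ z in C(1, r), (z - 1) ^ (-j - 1) • (1 : B →L[ℂ] B) = 0 := by
    rw [circleIntegral.integral_smul_const,
      circleIntegral.integral_sub_zpow_of_ne (by omega), zero_smul]
  have hint_id : CircleIntegrable (fun z => (z - 1) ^ (-j - 1) • (1 : B →L[ℂ] B)) 1 r :=
    ((continuousOn_sub_one_zpow hr _).smul continuousOn_const).circleIntegrable hr.le
  have hint_A : CircleIntegrable
      (fun z => A * ((z - 1) ^ (-(j - 1) - 1) • Ring.inverse (1 - z • A))) 1 r :=
    (hint _).const_smul (a := A)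
  rw [laurentN, laurentN, mul_smul_comm, mul_smul_comm, ← hcomm, ← hcomm,
    circleIntegral.integral_congr hr.le hpointwise,
    circleIntegral.integral_add hint_id hint_A, hpole, zero_add]

end LaurentCoefficients

theorem statement13_general
    {B : Type*} [NormedAddCommGroup B] [NormedSpace ℂ B] [CompleteSpace B]
    (A₁ : B →L[ℂ] B) (η : ℝ)
    (hinv : ∀ z : ℂ, ‖z‖ < 1 + η → z ≠ 1 → IsUnit (1 - z • A₁))
    (r : ℝ) (hr0 : 0 < r) (hrη : r < η)
    (hN2 : laurentN A₁ r (-2) ≠ 0)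
    (hNm : ∀ m : ℤ, 3 ≤ m → laurentN A₁ r (-m) = 0) :
    LinearMap.range ((1 - A₁ : B →L[ℂ] B) : B →ₗ[ℂ] B) ⊓ LinearMap.ker ((1 - A₁ : B →L[ℂ] B) : B →ₗ[ℂ] B) ≠ (⊥ : Submodule ℂ B) := by
  have hunit : ∀ z ∈ sphere (1 : ℂ) r, IsUnit (1 - z • A₁) := by
    intro z hz
    rw [mem_sphere_iff_norm] at hz
    refine hinv z ?_ (sub_ne_zero.mp (norm_pos_iff.mp (hz ▸ hr0)))
    linarith [norm_sub_norm_le z 1, norm_one (α := ℂ)]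
  have hN2_ker := one_sub_mul_laurentN A₁ hr0 hunit (j := -2) (by norm_num)
  rw [show (-2 : ℤ) - 1 = -3 by norm_num, hNm 3 le_rfl, mul_zero] at hN2_ker
  have hN1 := one_sub_mul_laurentN A₁ hr0 hunit (j := -1) (by norm_num)
  have hfix : A₁ * laurentN A₁ r (-2) = laurentN A₁ r (-2) := by
    rw [sub_mul, one_mul, sub_eq_zero] at hN2_ker
    exact hN2_ker.symm
  rw [show (-1 : ℤ) - 1 = -2 by norm_num, hfix] at hN1
  exact ContinuousLinearMap.range_inf_ker_ne_bot_of_mul_eq hN2 hN2_ker hN1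

/-- under the unit-root assumption, if `(I - zA₁)⁻¹` has a pole of order 2
at `z = 1` (`N_{-2} ≠ 0` and `N_{-m} = 0` for all `m ≥ 3`), then
`ran (I - A₁) ∩ ker (I - A₁) ≠ {0}`. -/
theorem statement13
    {B : Type*} [NormedAddCommGroup B] [NormedSpace ℂ B] [CompleteSpace B]
    (A₁ : B →L[ℂ] B) (η : ℝ) (hη : 0 < η)
    (hinv : ∀ z : ℂ, ‖z‖ < 1 + η → z ≠ 1 → IsUnit (1 - z • A₁))
    (hnot : ¬ IsUnit (1 - A₁))
    (r : ℝ) (hr0 : 0 < r) (hrη : r < η)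
    (hN2 : laurentN A₁ r (-2) ≠ 0)
    (hNm : ∀ m : ℤ, 3 ≤ m → laurentN A₁ r (-m) = 0) :
    LinearMap.range ((1 - A₁ : B →L[ℂ] B) : B →ₗ[ℂ] B) ⊓ LinearMap.ker ((1 - A₁ : B →L[ℂ] B) : B →ₗ[ℂ] B) ≠ (⊥ : Submodule ℂ B) :=
  statement13_general A₁ η hinv r hr0 hrη hN2 hNm
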